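/- Let α be a finite type, let η ∈ (0, 1] with 6·η² ≤ 1, let k be a positive natural number, let D_C, D₁, …, D_k be distributions on α, let q₁, …, q_k ∈ [0, 1] with ∑ i, q i = 1, and set r = ∑ i, q i * f(d_H(D_C, D i)) where f(x) = (1/2)·(1 + (1 − x²)²). Let N be a natural number with 2 * Real.exp (−η^4 * N / 2) < 2/3, and let μ be the product measure on Fin N → Bool of N copies of the Bernoulli measure on Bool with probability r of true. If μ {ω | ((Finset.univ.filter (fun i => ω i = true)).card : ℝ) / N ≥ 1 − 2·η²} ≥ 2/3, then d_H(∑ i, q i • D i, D_C) ≤ 12 * η^(1/4). (Probabilistic core of the soundness of Theorem 4.7 for provers sending mixed states: if a prover sending in every round the mixed state ρ_A = ∑ q_i |ψ_{D_i}⟩⟨ψ_{D_i}| passes the verifier's test with probability at least 2/3, then the sampling distribution ∑ q_i D_i is O(η^{1/4})-close to D_C in Hellinger distance.) -/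

import Mathlib

open MeasureTheory

noncomputable def hellingerDist {α : Type*} [Fintype α] (P Q : α → ℝ) : ℝ :=
  (1 / Real.sqrt 2) * Real.sqrt (∑ x, (Real.sqrt (P x) - Real.sqrt (Q x)) ^ 2)

noncomputable def bernoulliMeasure (p : ℝ) : Measure Bool :=
  ENNReal.ofReal p • Measure.dirac true + ENNReal.ofReal (1 - p) • Measure.dirac false

instance (p : ℝ) : IsFiniteMeasure (bernoulliMeasure p) := by
  constructor
  simp only [bernoulliMeasure, Measure.add_apply, Measure.smul_apply, smul_eq_mul,
    measure_univ, mul_one]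
  exact ENNReal.add_lt_top.mpr ⟨ENNReal.ofReal_lt_top, ENNReal.ofReal_lt_top⟩

/-!
Each round accepts with probability `r = (1 + ∑ qᵢ bᵢ²) / 2`, where `bᵢ ≤ 1` is the
Bhattacharyya coefficient of `D_C` and `Dᵢ` (recall `d_H² = 1 - b`). By Chebyshev's inequality,
an empirical acceptance rate of at least `1 - 2η²` with probability `2/3` forces
`r ≥ 1 - 3η²`, hence `∑ qᵢ bᵢ ≥ ∑ qᵢ bᵢ² ≥ 1 - 6η²`. Concavity of the square root makes the
Bhattacharyya coefficient concave in each argument, so the mixture `∑ qᵢ Dᵢ` has coefficient at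
least `1 - 6η²` with `D_C`, i.e. Hellinger distance at most `√6 η ≤ 12 η^(1/4)`.
-/

open Finset

lemma bernoulliMeasure_eq {p : ℝ} (hp : p ∈ Set.Icc 0 1) :
    bernoulliMeasure p = ProbabilityTheory.bernoulliMeasure true false ⟨p, hp⟩ := by
  simp only [bernoulliMeasure, ProbabilityTheory.bernoulliMeasure_def]
  congr 2
  · exact ENNReal.ofReal_eq_coe_nnreal hp.1
  · exact ENNReal.ofReal_eq_coe_nnreal (sub_nonneg.2 hp.2)

noncomputable def empiricalMean {N : ℕ} (ω : Fin N → Bool) : ℝ :=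
  ((univ.filter fun i => ω i = true).card : ℝ) / N

open ProbabilityTheory in
lemma pi_bernoulliMeasure_empiricalMean_ge_le {N : ℕ} (hN : 0 < N) {p t : ℝ}
    (hp : p ∈ Set.Icc 0 1) (ht : 0 < t) :
    Measure.pi (fun _ : Fin N => bernoulliMeasure p) {ω | p + t ≤ empiricalMean ω}
      ≤ ENNReal.ofReal (p * (1 - p) / (N * t ^ 2)) := by
  set ν := Ber(true, false, ⟨p, hp⟩)
  set μ := Measure.pi fun _ : Fin N => ν
  let X : Bool → ℝ := fun b => if b then 1 else 0
  let S : (Fin N → Bool) → ℝ := ∑ i, fun ω => X (ω i)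
  have hX : MemLp X 2 ν := .of_discrete
  have hXi (i : Fin N) : MemLp (fun ω : Fin N → Bool => X (ω i)) 2 μ :=
    hX.comp_measurePreserving (measurePreserving_eval _ i)
  have hXmean : ν[X] = p := by simp [ν, X, integral_bernoulliMeasure]
  have hS : MemLp S 2 μ := memLp_finsetSum' _ fun i _ => hXi i
  have hSmean : μ[S] = N * p := by
    simp only [S, Finset.sum_apply]
    rw [integral_finsetSum _ fun i _ => (hXi i).integrable one_le_two]
    simp [μ, integral_comp_eval (μ := fun _ : Fin N => ν) hX.1, hXmean]
  have hSvar : variance S μ ≤ N * (p * (1 - p)) := by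
    have hXvar : variance X ν ≤ (1 - ν[X]) * (ν[X] - 0) :=
      variance_le_sub_mul_sub (.of_forall fun b => by cases b <;> simp [X]) hX.aemeasurable
    rw [hXmean] at hXvar
    rw [variance_sum_pi fun _ => hX]
    simpa [mul_comm] using mul_le_mul_of_nonneg_left hXvar (Nat.cast_nonneg N)
  have hScount (ω : Fin N → Bool) : S ω = ((univ.filter fun i => ω i = true).card : ℝ) := by
    rw [natCast_card_filter]
    simp [S, X]
  have hN' : (0 : ℝ) < N := by exact_mod_cast hN
  calc _ ≤ μ {ω | N * t ≤ |S ω - μ[S]|} := by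
        rw [bernoulliMeasure_eq hp, hSmean]
        refine measure_mono fun ω hω => ?_
        rw [Set.mem_ofPred_eq, empiricalMean, le_div_iff₀ hN'] at hω
        rw [Set.mem_ofPred_eq, hScount, le_abs]
        left
        linarith
    _ ≤ ENNReal.ofReal (variance S μ / (N * t) ^ 2) :=
        meas_ge_le_variance_div_sq hS (by positivity)
    _ ≤ ENNReal.ofReal (N * (p * (1 - p)) / (N * t) ^ 2) := by gcongr
    _ = _ := by
        congr 1
        field_simp

lemma sub_le_of_two_thirds_le_pi_bernoulliMeasure {N : ℕ} {p s : ℝ} (hp : p ∈ Set.Icc 0 1)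
    (hs : 0 < s) (hNs : 3 / 8 < N * s ^ 2)
    (h : 2 / 3 ≤ Measure.pi (fun _ : Fin N => bernoulliMeasure p)
      {ω | 1 - 2 * s ≤ empiricalMean ω}) :
    1 - 3 * s ≤ p := by
  by_contra! hlt
  have hN : 0 < N := Nat.pos_of_ne_zero (by rintro rfl; norm_num at hNs)
  have ht : 0 < 1 - 2 * s - p := by linarith
  have hbound := pi_bernoulliMeasure_empiricalMean_ge_le hN hp ht
  rw [add_sub_cancel] at hbound
  have hsmall : p * (1 - p) / (N * (1 - 2 * s - p) ^ 2) < 2 / 3 := by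
    have hvar : p * (1 - p) ≤ 1 / 4 := by nlinarith [sq_nonneg (p - 1 / 2)]
    have hdev : N * s ^ 2 ≤ N * (1 - 2 * s - p) ^ 2 := by gcongr; linarith
    rw [div_lt_iff₀ (by positivity)]
    linarith
  have := h.trans hbound
  rw [ENNReal.le_ofReal_iff_toReal_le (ENNReal.div_ne_top (by simp) (by simp))
    (div_nonneg (mul_nonneg hp.1 (sub_nonneg.2 hp.2)) (by positivity))] at this
  norm_num at this
  linarith

section Hellinger

variable {α : Type*} [Fintype α]

noncomputable def bhattacharyya (P Q : α → ℝ) : ℝ :=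
  ∑ x, Real.sqrt (P x) * Real.sqrt (Q x)

lemma bhattacharyya_comm (P Q : α → ℝ) : bhattacharyya P Q = bhattacharyya Q P := by
  simp only [bhattacharyya, mul_comm]

lemma bhattacharyya_nonneg (P Q : α → ℝ) : 0 ≤ bhattacharyya P Q :=
  sum_nonneg fun _ _ => by positivity

lemma hellingerDist_nonneg (P Q : α → ℝ) : 0 ≤ hellingerDist P Q := by
  unfold hellingerDist
  positivity

variable {P Q : α → ℝ}

lemma hellingerDist_sq (hP0 : ∀ x, 0 ≤ P x) (hP1 : ∑ x, P x = 1) (hQ0 : ∀ x, 0 ≤ Q x)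
    (hQ1 : ∑ x, Q x = 1) :
    hellingerDist P Q ^ 2 = 1 - bhattacharyya P Q := by
  have hsq (x : α) : (Real.sqrt (P x) - Real.sqrt (Q x)) ^ 2
      = P x + Q x - 2 * (Real.sqrt (P x) * Real.sqrt (Q x)) := by
    rw [sub_sq, Real.sq_sqrt (hP0 x), Real.sq_sqrt (hQ0 x)]
    ring
  rw [hellingerDist, mul_pow, Real.sq_sqrt (sum_nonneg fun _ _ => sq_nonneg _), div_pow,
    Real.sq_sqrt zero_le_two, sum_congr rfl fun x _ => hsq x, sum_sub_distrib, sum_add_distrib,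
    hP1, hQ1, ← mul_sum, bhattacharyya]
  ring

lemma bhattacharyya_le_one (hP0 : ∀ x, 0 ≤ P x) (hP1 : ∑ x, P x = 1) (hQ0 : ∀ x, 0 ≤ Q x)
    (hQ1 : ∑ x, Q x = 1) :
    bhattacharyya P Q ≤ 1 := by
  linarith [hellingerDist_sq hP0 hP1 hQ0 hQ1, sq_nonneg (hellingerDist P Q)]

lemma sum_mul_bhattacharyya_le {ι : Type*} [Fintype ι] {q : ι → ℝ} (hq0 : ∀ i, 0 ≤ q i)
    (hq1 : ∑ i, q i = 1) (P : α → ℝ) {D : ι → α → ℝ} (hD0 : ∀ i x, 0 ≤ D i x) :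
    ∑ i, q i * bhattacharyya P (D i) ≤ bhattacharyya P fun x => ∑ i, q i * D i x := by
  have hjensen (x : α) : ∑ i, q i * Real.sqrt (D i x) ≤ Real.sqrt (∑ i, q i * D i x) := by
    simpa only [smul_eq_mul] using Real.strictConcaveOn_sqrt.concaveOn.le_map_sum
      (fun i _ => hq0 i) hq1 (fun i _ => Set.mem_Ici.2 (hD0 i x))
  calc ∑ i, q i * bhattacharyya P (D i)
      = ∑ x, Real.sqrt (P x) * ∑ i, q i * Real.sqrt (D i x) := by
        simp only [bhattacharyya, mul_sum]
        rw [sum_comm]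
        exact sum_congr rfl fun _ _ => sum_congr rfl fun _ _ => by ring
    _ ≤ _ := sum_le_sum fun x _ => mul_le_mul_of_nonneg_left (hjensen x) (Real.sqrt_nonneg _)

lemma hellingerDist_mixture_sq_le {ι : Type*} [Fintype ι] {q : ι → ℝ} (hq0 : ∀ i, 0 ≤ q i)
    (hq1 : ∑ i, q i = 1) {D : ι → α → ℝ} (hD0 : ∀ i x, 0 ≤ D i x) (hD1 : ∀ i, ∑ x, D i x = 1)
    (hP0 : ∀ x, 0 ≤ P x) (hP1 : ∑ x, P x = 1) :
    hellingerDist (fun x => ∑ i, q i * D i x) P ^ 2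
      ≤ 1 - ∑ i, q i * bhattacharyya P (D i) ^ 2 := by
  have hmix0 (x : α) : 0 ≤ ∑ i, q i * D i x := sum_nonneg fun i _ => mul_nonneg (hq0 i) (hD0 i x)
  have hmix1 : ∑ x, ∑ i, q i * D i x = 1 := by
    rw [sum_comm]
    simp [← mul_sum, hD1, hq1]
  have hsq_le (i : ι) : bhattacharyya P (D i) ^ 2 ≤ bhattacharyya P (D i) := by
    nlinarith [bhattacharyya_nonneg P (D i), bhattacharyya_le_one hP0 hP1 (hD0 i) (hD1 i)]
  rw [hellingerDist_sq hmix0 hmix1 hP0 hP1, bhattacharyya_comm]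
  linarith [sum_mul_bhattacharyya_le hq0 hq1 P hD0,
    sum_le_sum fun i (_ : i ∈ univ) => mul_le_mul_of_nonneg_left (hsq_le i) (hq0 i)]

end Hellinger

theorem mixed_state_soundness_probabilistic_core_general {α : Type*} [Fintype α]
    (η : ℝ) (hη : η ∈ Set.Ioc (0 : ℝ) 1)
    (k : ℕ)
    (DC : α → ℝ) (D : Fin k → α → ℝ) (q : Fin k → ℝ)
    (hDC0 : ∀ x, 0 ≤ DC x) (hDC1 : ∑ x, DC x = 1)
    (hD0 : ∀ i x, 0 ≤ D i x) (hD1 : ∀ i, ∑ x, D i x = 1)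
    (hq : ∀ i, q i ∈ Set.Icc (0 : ℝ) 1) (hq1 : ∑ i, q i = 1)
    (r : ℝ)
    (hr : r = ∑ i, q i * ((1 / 2) * (1 + (1 - hellingerDist DC (D i) ^ 2) ^ 2)))
    (N : ℕ) (hN : 2 * Real.exp (-η ^ 4 * N / 2) < 2 / 3)
    (h : (Measure.pi fun _ : Fin N => bernoulliMeasure r)
        {ω | ((Finset.univ.filter fun i => ω i = true).card : ℝ) / N ≥
          1 - 2 * η ^ 2} ≥ 2 / 3) :
    hellingerDist (fun x => ∑ i, q i * D i x) DC ≤ 12 * η ^ ((1 : ℝ) / 4) := by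
  obtain ⟨hη0, hη1⟩ := hη
  have hq0 (i : Fin k) : 0 ≤ q i := (hq i).1
  set B := ∑ i, q i * bhattacharyya DC (D i) ^ 2
  have hr' : r = (1 + B) / 2 := by
    have hterm (i : Fin k) : q i * ((1 / 2) * (1 + (1 - hellingerDist DC (D i) ^ 2) ^ 2))
        = q i / 2 + q i * bhattacharyya DC (D i) ^ 2 / 2 := by
      rw [hellingerDist_sq hDC0 hDC1 (hD0 i) (hD1 i), sub_sub_cancel]
      ring
    rw [hr, sum_congr rfl fun i _ => hterm i, sum_add_distrib, ← sum_div, ← sum_div, hq1,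
      add_div]
  have hB : B ∈ Set.Icc 0 1 := by
    have hb (i : Fin k) : bhattacharyya DC (D i) ^ 2 ≤ 1 :=
      pow_le_one₀ (bhattacharyya_nonneg _ _) (bhattacharyya_le_one hDC0 hDC1 (hD0 i) (hD1 i))
    refine ⟨sum_nonneg fun i _ => mul_nonneg (hq0 i) (sq_nonneg _), ?_⟩
    calc B ≤ ∑ i, q i := sum_le_sum fun i _ => mul_le_of_le_one_right (hq0 i) (hb i)
      _ = 1 := hq1
  have hNη : 3 / 8 < N * (η ^ 2) ^ 2 := by
    nlinarith [Real.add_one_le_exp (-η ^ 4 * N / 2)]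
  have hr_ge : 1 - 3 * η ^ 2 ≤ r :=
    sub_le_of_two_thirds_le_pi_bernoulliMeasure (by rw [hr']; constructor <;> linarith [hB.1, hB.2])
      (by positivity) hNη h
  have hdist_sq : hellingerDist (fun x => ∑ i, q i * D i x) DC ^ 2 ≤ (3 * η) ^ 2 := by
    nlinarith [hellingerDist_mixture_sq_le hq0 hq1 hD0 hD1 hDC0 hDC1]
  calc hellingerDist (fun x => ∑ i, q i * D i x) DC
      ≤ 3 * η :=
        (pow_le_pow_iff_left₀ (hellingerDist_nonneg _ _) (by positivity) two_ne_zero).1 hdist_sq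
    _ ≤ 12 * η ^ ((1 : ℝ) / 4) := by
        nlinarith [Real.self_le_rpow_of_le_one hη0.le hη1 (by norm_num : (1 : ℝ) / 4 ≤ 1)]

/-- Probabilistic core of the soundness of Theorem 4.7 for provers sending
mixed states: if a prover sending in every round the mixed state
`ρ_A = ∑ q_i |ψ_{D_i}⟩⟨ψ_{D_i}|` passes the verifier's test (empirical mean of
Bernoulli trials with success probability `r = ∑ i, q i · f(d_H(D_C, D i))` at
least `1 − 2η²`) with probability at least `2/3`, then the sampling
distribution `∑ q_i • D_i` is `12·η^(1/4)`-close to `D_C` in Hellinger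
distance. -/
theorem mixed_state_soundness_probabilistic_core {α : Type*} [Fintype α]
    (η : ℝ) (hη : η ∈ Set.Ioc (0 : ℝ) 1) (hη2 : 6 * η ^ 2 ≤ 1)
    (k : ℕ) (hk : 0 < k)
    (DC : α → ℝ) (D : Fin k → α → ℝ) (q : Fin k → ℝ)
    (hDC0 : ∀ x, 0 ≤ DC x) (hDC1 : ∑ x, DC x = 1)
    (hD0 : ∀ i x, 0 ≤ D i x) (hD1 : ∀ i, ∑ x, D i x = 1)
    (hq : ∀ i, q i ∈ Set.Icc (0 : ℝ) 1) (hq1 : ∑ i, q i = 1)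
    (r : ℝ)
    (hr : r = ∑ i, q i * ((1 / 2) * (1 + (1 - hellingerDist DC (D i) ^ 2) ^ 2)))
    (N : ℕ) (hN : 2 * Real.exp (-η ^ 4 * N / 2) < 2 / 3)
    (h : (Measure.pi fun _ : Fin N => bernoulliMeasure r)
        {ω | ((Finset.univ.filter fun i => ω i = true).card : ℝ) / N ≥
          1 - 2 * η ^ 2} ≥ 2 / 3) :
    hellingerDist (fun x => ∑ i, q i * D i x) DC ≤ 12 * η ^ ((1 : ℝ) / 4) :=
  mixed_state_soundness_probabilistic_core_general η hη k DC D q hDC0 hDC1 hD0 hD1 hq hq1 r hr N hN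
    h
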